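/- arXiv:1806.11542 — 2 statements merged into one kernel-verified Lean document; each statement's English description precedes it below -/
import Mathlib

section
/- Let t > 1 and let β_0 ≥ β_1 ≥ ... ≥ β_{n'} ≥ 0 be a nonincreasing sequence of reals. Define U' = β_0 + (t-1)·Σ_{i=0}^{n'-1} β_i t^i and L' = β_0 + (t-1)·Σ_{i=0}^{n'-1} β_{min(i+2, n')} t^i. Then U' ≤ t² · L'. -/
/-
Put `g i = β_{min(i, n')} t^i ≥ 0`. Then `t² L'` is
`t² β_0 + (t-1) Σ_{i<n'} g (i+2)`, while dropping nonnegative terms gives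
`Σ_{i<n'} g i ≤ g 0 + g 1 + Σ_{i<n'} g (i+2)`. What is left is
`β_0 + (t-1)(β_0 + t β_{min(1, n')}) ≤ t² β_0`, i.e. `β_{min(1, n')} ≤ β_0`.
-/

theorem Finset.sum_range_le_add_sum_range_shift_two {M : Type*} [AddCommMonoid M] [PartialOrder M]
    [IsOrderedAddMonoid M] (g : ℕ → M) (hg : ∀ i, 0 ≤ g i) (n : ℕ) :
    ∑ i ∈ range n, g i ≤ g 0 + g 1 + ∑ i ∈ range n, g (i + 2) := by
  calc ∑ i ∈ range n, g i
      ≤ ∑ i ∈ range (n + 2), g i :=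
        sum_le_sum_of_subset_of_nonneg (range_subset_range.mpr (by omega)) fun i _ _ => hg i
    _ = g 0 + g 1 + ∑ i ∈ range n, g (i + 2) := by
        rw [sum_range_succ', sum_range_succ']
        abel

theorem stmt4_general (t : ℝ) (ht : 1 < t) (n' : ℕ) (β : ℕ → ℝ)
    (hmono : ∀ i j, i ≤ j → j ≤ n' → β j ≤ β i) (hnonneg : ∀ i, i ≤ n' → 0 ≤ β i) :
    β 0 + (t - 1) * ∑ i ∈ Finset.range n', β i * t ^ i
      ≤ t ^ 2 * (β 0 + (t - 1) * ∑ i ∈ Finset.range n', β (min (i + 2) n') * t ^ i) := by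
  set g : ℕ → ℝ := fun i => β (min i n') * t ^ i with hg
  have hg_nonneg : ∀ i, 0 ≤ g i := fun i =>
    mul_nonneg (hnonneg _ (min_le_right _ _)) (pow_nonneg (by linarith) _)
  have hU : ∑ i ∈ Finset.range n', β i * t ^ i = ∑ i ∈ Finset.range n', g i :=
    Finset.sum_congr rfl fun i hi => by
      show _ = β (min i n') * t ^ i
      rw [min_eq_left (Finset.mem_range.mp hi).le]
  have hL : t ^ 2 * ∑ i ∈ Finset.range n', β (min (i + 2) n') * t ^ i
      = ∑ i ∈ Finset.range n', g (i + 2) := by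
    rw [Finset.mul_sum]
    exact Finset.sum_congr rfl fun i _ => by ring
  have hshift := Finset.sum_range_le_add_sum_range_shift_two g hg_nonneg n'
  have hβ₁ : β (min 1 n') ≤ β 0 := hmono 0 _ (Nat.zero_le _) (min_le_right _ _)
  have hg₀ : g 0 = β 0 := by simp [hg]
  have hg₁ : g 1 = β (min 1 n') * t := by simp [hg]
  rw [hg₀, hg₁] at hshift
  calc β 0 + (t - 1) * ∑ i ∈ Finset.range n', β i * t ^ i
      ≤ β 0 + (t - 1) * (β 0 + β (min 1 n') * t + ∑ i ∈ Finset.range n', g (i + 2)) := by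
        rw [hU]; gcongr
    _ ≤ t ^ 2 * β 0 + (t - 1) * ∑ i ∈ Finset.range n', g (i + 2) := by
        linear_combination mul_le_mul_of_nonneg_left hβ₁ (by nlinarith : (0 : ℝ) ≤ (t - 1) * t)
    _ = t ^ 2 * (β 0 + (t - 1) * ∑ i ∈ Finset.range n', β (min (i + 2) n') * t ^ i) := by
        rw [← hL]; ring

/-- For `t > 1` and a nonincreasing nonnegative sequence `β_0 ≥ ... ≥ β_{n'}`, the upper
estimate `U' = β_0 + (t-1) Σ β_i t^i` and lower estimate
`L' = β_0 + (t-1) Σ β_{min(i+2,n')} t^i` satisfy `U' ≤ t² L'`. -/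
theorem stmt4 (t : ℝ) (ht : 1 < t) (n' : ℕ) (hn' : 1 ≤ n') (β : ℕ → ℝ)
    (hmono : ∀ i j, i ≤ j → j ≤ n' → β j ≤ β i) (hnonneg : ∀ i, i ≤ n' → 0 ≤ β i) :
    β 0 + (t - 1) * ∑ i ∈ Finset.range n', β i * t ^ i
      ≤ t ^ 2 * (β 0 + (t - 1) * ∑ i ∈ Finset.range n', β (min (i + 2) n') * t ^ i) :=
  stmt4_general t ht n' β hmono hnonneg
end

section
/- Any family H of functions from {0,1}^n to {0,1}^m that is uniform and pairwise independent (with respect to the uniform distribution on H) has size |H| ≥ 2^{m+n} − 2^n + 1. -/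
/-!
Work in `ℝ^H` with `⟨f, g⟩ = ∑ h ∈ H, f h * g h`, and fix an orthonormal basis
`φ₁, …, φ_{|Y|-1}` of the mean-zero functions on `Y`. Uniformity makes the vectors
`h ↦ φᵢ (h x)` orthogonal to the constants and, for a fixed point `x`, to each other; pairwise
independence makes the vectors attached to distinct points orthogonal, because each factor has
mean zero. These `|X| (|Y| - 1) + 1` nonzero orthogonal vectors are linearly independent, so
`|H|` is at least their number.
-/

open Finset

theorem exists_orthonormal_sum_eq_zero (Y : Type*) [Fintype Y] :
    ∃ φ : Fin (Fintype.card Y - 1) → Y → ℝ, (∀ i, ∑ y, φ i y = 0) ∧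
      ∀ i j, ∑ y, φ i y * φ j y = if i = j then 1 else 0 := by
  set one : EuclideanSpace ℝ Y := WithLp.toLp 2 fun _ => 1
  set K := (ℝ ∙ one)ᗮ
  have hK : Fintype.card Y - 1 ≤ Module.finrank ℝ K := by
    have hsum := K.finrank_add_finrank_orthogonal
    have hspan : Module.finrank ℝ (ℝ ∙ one) ≤ 1 := by
      simpa using finrank_span_le_card (R := ℝ) ({one} : Set (EuclideanSpace ℝ Y))
    rw [Submodule.orthogonal_orthogonal, finrank_euclideanSpace] at hsum
    omega
  let b := stdOrthonormalBasis ℝ K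
  refine ⟨fun i y => (b (Fin.castLE hK i) : EuclideanSpace ℝ Y) y, fun i => ?_, fun i j => ?_⟩
  · have h := Submodule.mem_orthogonal_singleton_iff_inner_right.1 (b (Fin.castLE hK i)).2
    simpa [one, PiLp.inner_apply] using h
  · have h := orthonormal_iff_ite.1 b.orthonormal (Fin.castLE hK i) (Fin.castLE hK j)
    simp only [Submodule.coe_inner, PiLp.inner_apply, RCLike.inner_apply, conj_trivial,
      (Fin.castLE_injective hK).eq_iff] at h
    rw [← h]
    exact sum_congr rfl fun y _ => mul_comm _ _

namespace Finset

variable {X Y : Type*} [Fintype Y] [DecidableEq Y] (H : Finset (X → Y))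

def IsUniformFamily : Prop :=
  ∀ x y, #{h ∈ H | h x = y} * Fintype.card Y = #H

def IsPairwiseIndependentFamily : Prop :=
  ∀ x x', x ≠ x' → ∀ y y', #{h ∈ H | h x = y ∧ h x' = y'} * #H =
    #{h ∈ H | h x = y} * #{h ∈ H | h x' = y'}

theorem sum_comp_eval_eq_sum_card_filter (x : X) (F : Y → ℝ) :
    ∑ h ∈ H, F (h x) = ∑ y, (#{h ∈ H | h x = y} : ℝ) * F y := by
  simp only [← sum_fiberwise' H (fun h => h x) F, sum_const, nsmul_eq_mul]

theorem sum_comp_eval_mul_comp_eval_eq_sum_card_filter (x x' : X) (F G : Y → ℝ) :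
    ∑ h ∈ H, F (h x) * G (h x') =
      ∑ y, ∑ y', (#{h ∈ H | h x = y ∧ h x' = y'} : ℝ) * (F y * G y') := by
  rw [← sum_fiberwise' H (fun h => (h x, h x')) fun p => F p.1 * G p.2, Fintype.sum_prod_type]
  simp only [Prod.ext_iff, sum_const, nsmul_eq_mul]

variable {H}

theorem IsUniformFamily.sum_comp_eval_mul_card (hu : H.IsUniformFamily) (x : X) (F : Y → ℝ) :
    (∑ h ∈ H, F (h x)) * Fintype.card Y = #H * ∑ y, F y := by
  rw [sum_comp_eval_eq_sum_card_filter, sum_mul, mul_sum]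
  refine sum_congr rfl fun y _ => ?_
  rw [← hu x y]
  push_cast
  ring

theorem IsUniformFamily.sum_comp_eval_eq_zero (hu : H.IsUniformFamily) (hne : H.Nonempty)
    (x : X) {F : Y → ℝ} (hF : ∑ y, F y = 0) : ∑ h ∈ H, F (h x) = 0 := by
  have : Nonempty Y := ⟨hne.choose x⟩
  have h := hu.sum_comp_eval_mul_card x F
  rw [hF, mul_zero] at h
  exact (mul_eq_zero.1 h).resolve_right (by simp)

theorem IsPairwiseIndependentFamily.sum_comp_eval_mul_comp_eval_mul_card
    (hp : H.IsPairwiseIndependentFamily) {x x' : X} (hx : x ≠ x') (F G : Y → ℝ) :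
    (∑ h ∈ H, F (h x) * G (h x')) * #H = (∑ h ∈ H, F (h x)) * ∑ h ∈ H, G (h x') := by
  rw [sum_comp_eval_mul_comp_eval_eq_sum_card_filter, sum_comp_eval_eq_sum_card_filter,
    sum_comp_eval_eq_sum_card_filter, sum_mul_sum, sum_mul]
  refine sum_congr rfl fun y _ => ?_
  rw [sum_mul]
  refine sum_congr rfl fun y' _ => ?_
  have h := congrArg (Nat.cast : ℕ → ℝ) (hp x x' hx y y')
  push_cast at h
  linear_combination F y * G y' * h

theorem IsPairwiseIndependentFamily.card_mul_card_sub_one_add_one_le_card [Fintype X]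
    (hp : H.IsPairwiseIndependentFamily) (hu : H.IsUniformFamily) (hne : H.Nonempty) :
    Fintype.card X * (Fintype.card Y - 1) + 1 ≤ #H := by
  obtain ⟨φ, hφ_sum, hφ_orth⟩ := exists_orthonormal_sum_eq_zero Y
  have hH : (#H : ℝ) ≠ 0 := by simp [hne.ne_empty]
  let v : Option (X × Fin (Fintype.card Y - 1)) → (X → Y) → ℝ
    | none => fun _ => 1
    | some (x, i) => fun h => φ i (h x)
  have hself (a) : ∑ h ∈ H, v a h * v a h ≠ 0 := by
    rcases a with _ | ⟨x, i⟩
    · simpa [v] using hH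
    · intro h0
      have := hu.sum_comp_eval_mul_card x fun y => φ i y * φ i y
      simp only [v] at h0
      rw [h0, hφ_orth, if_pos rfl, zero_mul, mul_one] at this
      exact hH this.symm
  have horth : Pairwise fun a b => ∑ h ∈ H, v a h * v b h = 0 := by
    rintro (_ | ⟨x, i⟩) (_ | ⟨x', j⟩) hab
    · exact absurd rfl hab
    · simpa [v] using hu.sum_comp_eval_eq_zero hne x' (hφ_sum j)
    · simpa [v] using hu.sum_comp_eval_eq_zero hne x (hφ_sum i)
    · by_cases hx : x = x'
      · subst hx
        have hij : i ≠ j := fun h => hab (by rw [h])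
        have hF : ∑ y, φ i y * φ j y = 0 := by rw [hφ_orth, if_neg hij]
        exact hu.sum_comp_eval_eq_zero hne x hF
      · have := hp.sum_comp_eval_mul_comp_eval_mul_card hx (φ i) (φ j)
        rw [hu.sum_comp_eval_eq_zero hne x (hφ_sum i), zero_mul] at this
        exact (mul_eq_zero.1 this).resolve_right hH
  let V (a : Option (X × Fin (Fintype.card Y - 1))) : EuclideanSpace ℝ H :=
    WithLp.toLp 2 fun h => v a h
  have hinner (a b) : inner ℝ (V a) (V b) = ∑ h ∈ H, v a h * v b h := by
    rw [PiLp.inner_apply, ← sum_coe_sort H]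
    exact sum_congr rfl fun h _ => mul_comm _ _
  have hli : LinearIndependent ℝ V :=
    linearIndependent_of_ne_zero_of_inner_eq_zero
      (fun a ha => hself a (by rw [← hinner, ha, inner_zero_left]))
      fun a b hab => (hinner a b).trans (horth hab)
  simpa using hli.fintype_card_le_finrank

end Finset

open Classical in
/-- Any uniform, pairwise independent family `H` of hash functions
`{0,1}^n → {0,1}^m` has size at least `2^{m+n} - 2^n + 1`. -/
theorem stmt11 (n m : ℕ) (H : Finset ((Fin n → Bool) → (Fin m → Bool))) (hne : H.Nonempty)
    (hunif : ∀ (x : Fin n → Bool) (u : Fin m → Bool),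
      (H.filter (fun h => h x = u)).card * 2 ^ m = H.card)
    (hpair : ∀ (x y : Fin n → Bool), x ≠ y → ∀ (u v : Fin m → Bool),
      (H.filter (fun h => h x = u ∧ h y = v)).card * H.card
        = (H.filter (fun h => h x = u)).card * (H.filter (fun h => h y = v)).card) :
    2 ^ (m + n) - 2 ^ n + 1 ≤ H.card := by
  have hu : H.IsUniformFamily := fun x u => by simpa using hunif x u
  have h := IsPairwiseIndependentFamily.card_mul_card_sub_one_add_one_le_card hpair hu hne
  simp only [Fintype.card_fun, Fintype.card_bool, Fintype.card_fin] at h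
  rw [pow_add, mul_comm, ← mul_tsub_one]
  exact h
end
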